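/- Let Φ(ρ) = Σ_{K ∈ K} K ρ K† be a map on 2^m × 2^m complex matrices given by a finite Kraus family K such that every K ∈ K factors as K = V_K · P_K for some diagonal matrix V_K and some m-qubit Pauli string P_K. Then for every m-qubit Pauli string W there exists a diagonal 2^m × 2^m matrix U such that Φ(W) = U · W. (Equivalently, Φ(W) lies in the span of {V·W : V ∈ {𝟙,Z}^{⊗m}}.) -/

import Mathlib

open Matrix

/-- The four Pauli matrices `𝟙, X, Y, Z`. -/
noncomputable def pauli : Fin 4 → Matrix (Fin 2) (Fin 2) ℂ
  | 0 => !![1, 0; 0, 1]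
  | 1 => !![0, 1; 1, 0]
  | 2 => !![0, -Complex.I; Complex.I, 0]
  | 3 => !![1, 0; 0, -1]

/-- The `m`-qubit Pauli string determined by `s : Fin m → Fin 4` (an `m`-fold Kronecker
product of Pauli matrices). -/
noncomputable def pauliString {m : ℕ} (s : Fin m → Fin 4) :
    Matrix (Fin m → Fin 2) (Fin m → Fin 2) ℂ :=
  Matrix.of fun a b => ∏ i, pauli (s i) (a i) (b i)

/-! The Kraus conjugation `K ρ Kᴴ` maps matrices supported on a shift `p` of the diagonal to
matrices supported on the same shift, because `K` and `Kᴴ` are supported on opposite shifts.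
A Pauli string is supported on a shift with all entries there nonzero, so any matrix on that
shift is a diagonal matrix times it. -/

def ShiftSupported {n R : Type*} [Add n] [Zero R] (p : n) (A : Matrix n n R) : Prop :=
  ∀ a b, b ≠ a + p → A a b = 0

namespace ShiftSupported

variable {n R : Type*} [AddCommGroup n]

theorem diagonal [DecidableEq n] [Zero R] (v : n → R) : ShiftSupported 0 (diagonal v) :=
  fun a b h => diagonal_apply_ne v fun hab => h (by rw [hab, add_zero])

theorem mul [Fintype n] [NonUnitalNonAssocSemiring R] {p q : n} {A B : Matrix n n R}
    (hA : ShiftSupported p A) (hB : ShiftSupported q B) : ShiftSupported (p + q) (A * B) := by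
  intro a b h
  rw [mul_apply]
  refine Finset.sum_eq_zero fun c _ => ?_
  by_cases hc : c = a + p
  · subst hc
    rw [hB _ _ (by rwa [add_assoc]), mul_zero]
  · rw [hA _ _ hc, zero_mul]

theorem conjTranspose [AddMonoid R] [StarAddMonoid R] {p : n} {A : Matrix n n R}
    (hA : ShiftSupported p A) : ShiftSupported (-p) Aᴴ := by
  intro a b h
  rw [conjTranspose_apply, hA b a fun hab => h (by rw [hab, add_neg_cancel_right]), star_zero]

theorem sum {ι : Type*} [AddCommMonoid R] {s : Finset ι} {p : n} {A : ι → Matrix n n R}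
    (hA : ∀ i ∈ s, ShiftSupported p (A i)) : ShiftSupported p (∑ i ∈ s, A i) := by
  intro a b h
  rw [Matrix.sum_apply]
  exact Finset.sum_eq_zero fun i hi => hA i hi a b h

theorem exists_eq_diagonal_mul [Fintype n] [DecidableEq n] [DivisionRing R] {p : n}
    {A M : Matrix n n R}
    (hA : ShiftSupported p A) (hM : ShiftSupported p M) (hM₀ : ∀ a, M a (a + p) ≠ 0) :
    ∃ u : n → R, A = Matrix.diagonal u * M := by
  refine ⟨fun a => A a (a + p) * (M a (a + p))⁻¹, ?_⟩
  ext a b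
  rw [diagonal_mul]
  by_cases hb : b = a + p
  · rw [hb, mul_assoc, inv_mul_cancel₀ (hM₀ a), mul_one]
  · rw [hA a b hb, hM a b hb, mul_zero]

end ShiftSupported

/-- `X` and `Y` flip the bit, `𝟙` and `Z` do not. -/
def pauliShift : Fin 4 → Fin 2 := ![0, 1, 1, 0]

theorem shiftSupported_pauli (k : Fin 4) : ShiftSupported (pauliShift k) (pauli k) := by
  intro a b
  fin_cases k <;> fin_cases a <;> fin_cases b <;> simp [pauli, pauliShift]

theorem pauli_apply_add_pauliShift_ne_zero (k : Fin 4) (a : Fin 2) :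
    pauli k a (a + pauliShift k) ≠ 0 := by
  fin_cases k <;> fin_cases a <;> simp [pauli, pauliShift]

theorem shiftSupported_pauliString {m : ℕ} (s : Fin m → Fin 4) :
    ShiftSupported (pauliShift ∘ s) (pauliString s) := by
  intro a b h
  obtain ⟨i, hi⟩ := Function.ne_iff.mp h
  exact Finset.prod_eq_zero (Finset.mem_univ i) (shiftSupported_pauli (s i) _ _ hi)

theorem pauliString_apply_add_pauliShift_ne_zero {m : ℕ} (s : Fin m → Fin 4)
    (a : Fin m → Fin 2) : pauliString s a (a + pauliShift ∘ s) ≠ 0 := by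
  rw [pauliString, of_apply, Finset.prod_ne_zero_iff]
  exact fun i _ => pauli_apply_add_pauliShift_ne_zero (s i) (a i)

/-- If every Kraus operator of `Φ(ρ) = Σ_K K ρ K†` factors as a diagonal
matrix times a Pauli string, then for every Pauli string `W`, `Φ(W) = U·W` for some diagonal
matrix `U`. -/
theorem channel_of_diagonal_times_pauli_kraus (m : ℕ) (ι : Type*) [Fintype ι]
    (K : ι → Matrix (Fin m → Fin 2) (Fin m → Fin 2) ℂ)
    (hK : ∀ i : ι, ∃ (v : (Fin m → Fin 2) → ℂ) (s : Fin m → Fin 4),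
      K i = Matrix.diagonal v * pauliString s) :
    ∀ w : Fin m → Fin 4, ∃ u : (Fin m → Fin 2) → ℂ,
      ∑ i : ι, K i * pauliString w * (K i)ᴴ = Matrix.diagonal u * pauliString w := by
  intro w
  have hW := shiftSupported_pauliString w
  have hterm : ∀ i, ShiftSupported (pauliShift ∘ w) (K i * pauliString w * (K i)ᴴ) := by
    intro i
    obtain ⟨v, s, hKi⟩ := hK i
    have hKi_supp : ShiftSupported (0 + pauliShift ∘ s) (K i) :=
      hKi ▸ (ShiftSupported.diagonal v).mul (shiftSupported_pauliString s)
    have h := (hKi_supp.mul hW).mul hKi_supp.conjTranspose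
    rwa [show 0 + pauliShift ∘ s + pauliShift ∘ w + -(0 + pauliShift ∘ s) = pauliShift ∘ w by
      abel] at h
  exact (ShiftSupported.sum fun i _ => hterm i).exists_eq_diagonal_mul hW
    (pauliString_apply_add_pauliShift_ne_zero w)
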